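/- For every ε > 0 there exists a constant C_ε > 0, depending only on ε, n, δ, g, γ_D and the constants C_β, such that for every v = r v̂ with r = |v| ≥ 1: ∫_{{t∈ℝ : |t|≥1}} ‖∇Ṽ^l_{|v|,t}‖_∞ dt ≤ C_ε |v|^{−2γ_D+ε}. -/

import Mathlib

open scoped InnerProductSpace
open MeasureTheory Real Filter

noncomputable section

/-- sup-norm of the gradient of `W` : `‖∇W‖_∞ = sup_x |∇W(x)|`. -/
noncomputable def gradSup {n : ℕ} (W : EuclideanSpace ℝ (Fin n) → ℝ) : ℝ :=
  ⨆ x, ‖fderiv ℝ W x‖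

/-- sup-norm of the Laplacian of `W` : `‖ΔW‖_∞ = sup_x |ΔW(x)|`. -/
noncomputable def lapSup {n : ℕ} (W : EuclideanSpace ℝ (Fin n) → ℝ) : ℝ :=
  ⨆ x, |∑ j, fderiv ℝ (fun y => fderiv ℝ W y (EuclideanSpace.single j 1)) x
      (EuclideanSpace.single j 1)|

/-- the cut-off translated potential
`Ṽ_{|v|,t}(x) = V(x + v t + e₁ t²/2) · g(x/(λ₁|v|⟨t⟩))`, with `v = r·v̂`. -/
noncomputable def cutV {n : ℕ} (V g : EuclideanSpace ℝ (Fin n) → ℝ)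
    (lam : ℝ) (vhat e1 : EuclideanSpace ℝ (Fin n)) (r t : ℝ) :
    EuclideanSpace ℝ (Fin n) → ℝ :=
  fun x => V (x + (r * t) • vhat + (t ^ 2 / 2) • e1) *
    g ((lam * r * Real.sqrt (1 + t ^ 2))⁻¹ • x)

/-- operator norm of a functional on Euclidean space bounded by coordinate bounds -/
lemma aux_opnorm_le {n : ℕ} (L : EuclideanSpace ℝ (Fin n) →L[ℝ] ℝ) {c : ℝ} (hc : 0 ≤ c)
    (h : ∀ j, |L (EuclideanSpace.single j 1)| ≤ c) : ‖L‖ ≤ n * c := by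
  refine L.opNorm_le_bound (by positivity) fun x => ?_
  have hx : ∑ j, x j • EuclideanSpace.single j (1:ℝ) = x := by
    simpa [EuclideanSpace.basisFun_apply, EuclideanSpace.basisFun_repr] using
      (EuclideanSpace.basisFun (Fin n) ℝ).sum_repr x
  have hcoord : ∀ j, |x j| ≤ ‖x‖ := by
    intro j
    have h2 : (x j) ^ 2 ≤ ∑ i, ‖x i‖ ^ 2 := by
      have := Finset.single_le_sum (f := fun i => ‖x i‖ ^ 2)
        (fun i _ => sq_nonneg _) (Finset.mem_univ j)
      simpa [Real.norm_eq_abs, sq_abs] using this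
    calc |x j| = Real.sqrt ((x j) ^ 2) := (Real.sqrt_sq_eq_abs _).symm
      _ ≤ Real.sqrt (∑ i, ‖x i‖ ^ 2) := Real.sqrt_le_sqrt h2
      _ = ‖x‖ := (EuclideanSpace.norm_eq x).symm
  calc ‖L x‖ = ‖L (∑ j, x j • EuclideanSpace.single j (1:ℝ))‖ := by rw [hx]
    _ = ‖∑ j, x j * L (EuclideanSpace.single j (1:ℝ))‖ := by
        rw [map_sum]; simp [smul_eq_mul]
    _ ≤ ∑ j, ‖x j * L (EuclideanSpace.single j (1:ℝ))‖ := norm_sum_le _ _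
    _ ≤ ∑ _j : Fin n, ‖x‖ * c := by
        refine Finset.sum_le_sum fun j _ => ?_
        rw [Real.norm_eq_abs, abs_mul]
        exact mul_le_mul (hcoord j) (h j) (abs_nonneg _) (norm_nonneg _)
    _ = ↑n * c * ‖x‖ := by
        rw [Finset.sum_const, Finset.card_univ, Fintype.card_fin]; push_cast; ring

/-- splitting of negative powers -/
lemma aux_split {X A B p q : ℝ} (hA : 0 < A) (hB : 0 < B) (hAX : A ≤ X) (hBX : B ≤ X)
    (hp : p ≤ 0) (hq : q ≤ 0) : X ^ (p + q) ≤ A ^ p * B ^ q := by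
  have hX : 0 < X := lt_of_lt_of_le hA hAX
  rw [Real.rpow_add hX]
  exact mul_le_mul (Real.rpow_le_rpow_of_nonpos hA hAX hp)
    (Real.rpow_le_rpow_of_nonpos hB hBX hq)
    (Real.rpow_nonneg hX.le _) (Real.rpow_nonneg hA.le _)

lemma aux_key {A B d cr : ℝ} (hA : 0 ≤ A) (hB : 0 ≤ B) (hd0 : 0 ≤ d) (hd1 : d < 1)
    (hcr : -(A * B * d) ≤ cr) :
    ((1 - d) / 2 * (A + B)) ^ 2 ≤ A ^ 2 + 2 * cr + B ^ 2 := by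
  nlinarith [sq_nonneg (A - B), sq_nonneg (A + B), mul_nonneg (mul_nonneg hA hB) hd0,
    mul_nonneg hd0 (sq_nonneg (A - B)), mul_nonneg hd0 (sq_nonneg (A + B)),
    mul_nonneg (mul_nonneg hA hB) (by linarith : (0:ℝ) ≤ 1 - d)]

lemma aux_lin {A B N x W d : ℝ} (h1 : (1 - d) / 2 * (A + B / 2) ≤ N)
    (h2 : x ≤ (1 - d) / 4 * A) (h3 : N - x ≤ W) :
    (1 - d) / 4 * (A + B) ≤ W := by linarith

lemma aux_sq_rpow (t b : ℝ) : (t ^ 2 : ℝ) ^ b = |t| ^ (2 * b) := by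
  rw [← sq_abs, ← Real.rpow_natCast |t| 2, ← Real.rpow_mul (abs_nonneg t)]
  norm_num

set_option maxHeartbeats 2000000 in
theorem stmt_16 (n : ℕ) (hn : 2 ≤ n)
    (e1 : EuclideanSpace ℝ (Fin n))
    (he1 : e1 = EuclideanSpace.single ⟨0, by omega⟩ (1 : ℝ))
    (vhat : EuclideanSpace ℝ (Fin n)) (hvhat : ‖vhat‖ = 1)
    (δ : ℝ) (hδ : δ = |⟪vhat, e1⟫_ℝ|) (hδ1 : δ < 1)
    (lam : ℝ) (hlam : lam = (1 - δ) / (16 * Real.sqrt 2))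
    (g : EuclideanSpace ℝ (Fin n) → ℝ) (hg : ContDiff ℝ (⊤ : ℕ∞) g)
    (hg0 : ∀ y, 0 ≤ g y) (hg1 : ∀ y, g y ≤ 1)
    (hg3 : ∀ y, ‖y‖ ≤ 3 → g y = 1) (hg4 : ∀ y, 4 ≤ ‖y‖ → g y = 0)
    (Vl : EuclideanSpace ℝ (Fin n) → ℝ) (hVl : ContDiff ℝ 2 Vl)
    (C0 C1 C2 γD : ℝ) (hC0 : 0 < C0) (hC1 : 0 < C1) (hC2 : 0 < C2)
    (hγD : 1 / 4 < γD) (hγD' : γD < 1 / 2)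
    (hVb : ∀ x, |Vl x| ≤ C0 * Real.sqrt (1 + ‖x‖ ^ 2) ^ (-γD))
    (hVd1 : ∀ x, ∀ j : Fin n,
      |fderiv ℝ Vl x (EuclideanSpace.single j 1)| ≤
        C1 * Real.sqrt (1 + ‖x‖ ^ 2) ^ (-γD - 1 / 2))
    (hVd2 : ∀ x, ∀ j k : Fin n,
      |fderiv ℝ (fun y => fderiv ℝ Vl y (EuclideanSpace.single k 1)) x
          (EuclideanSpace.single j 1)| ≤
        C2 * Real.sqrt (1 + ‖x‖ ^ 2) ^ (-γD - 1)) :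
    ∀ ε > (0 : ℝ), ∃ Cε > (0 : ℝ), ∀ r : ℝ, 1 ≤ r →
      ∫ t in {t : ℝ | 1 ≤ |t|}, gradSup (cutV Vl g lam vhat e1 r t) ≤
        Cε * r ^ (-(2 * γD) + ε) := by
  intro ε hε
  have hδ0 : 0 ≤ δ := by rw [hδ]; exact abs_nonneg _
  have h1δ : 0 < 1 - δ := by linarith
  have hlam0 : 0 < lam := by rw [hlam]; positivity
  have hγ0 : 0 < γD := by linarith
  -- bound on the derivative of g
  have hgc : HasCompactSupport g :=
    HasCompactSupport.intro (isCompact_closedBall (0 : EuclideanSpace ℝ (Fin n)) 4)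
      (fun x hx => hg4 x (le_of_lt (by
        simpa [Metric.mem_closedBall, dist_zero_right, not_le] using hx)))
  have hgd : Differentiable ℝ g := hg.differentiable (by simp)
  have hgfc : Continuous (fderiv ℝ g) := hg.continuous_fderiv (by simp)
  obtain ⟨Mg0, hMg0⟩ := hgfc.bounded_above_of_compact_support (hgc.fderiv ℝ)
  set Mg := max Mg0 0 with hMgdef
  have hMg : ∀ y, ‖fderiv ℝ g y‖ ≤ Mg := fun y => (by
    have := hMg0 y
    exact this.trans (le_max_left _ _))
  have hMgnn : 0 ≤ Mg := le_max_right _ _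
  -- bound on the gradient of V
  have hVdiff : Differentiable ℝ Vl := hVl.differentiable (by norm_num)
  have hV1 : ∀ y, ‖fderiv ℝ Vl y‖ ≤ ↑n * (C1 * Real.sqrt (1 + ‖y‖ ^ 2) ^ (-γD - 1 / 2)) :=
    fun y => aux_opnorm_le _ (by positivity) (fun j => hVd1 y j)
  -- constants
  set κ : ℝ := (1 - δ) / 4 with hκdef
  have hκ : 0 < κ := by rw [hκdef]; linarith
  set ε' : ℝ := min ε (2 * γD) / 2 with hε'def
  have hε'pos : 0 < ε' := by
    rw [hε'def]; have := lt_min hε (by linarith : (0:ℝ) < 2 * γD); linarith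
  have hε'le : ε' ≤ ε := by
    rw [hε'def]; have := min_le_left ε (2 * γD); linarith
  have hε'γ : ε' ≤ γD := by
    rw [hε'def]; have := min_le_right ε (2 * γD); linarith
  set a : ℝ := 2 * γD - ε' with hadef
  have haa : 0 < a := by rw [hadef]; linarith
  set b : ℝ := γD + 1 / 2 - a with hbdef
  have hb : 0 < b := by rw [hbdef, hadef]; linarith
  set η : ℝ := min ε' (2 * γD) with hηdef
  have hη : 0 < η := by rw [hηdef]; exact lt_min hε'pos (by linarith)
  have hηε' : η ≤ ε' := min_le_left _ _
  have hη2γ : η ≤ 2 * γD := min_le_right _ _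
  set M : ℝ := ↑n * C1 * κ ^ (-γD - 1 / 2) + C0 * Mg * κ ^ (-γD) * lam⁻¹ with hMdef
  have hMnn : 0 ≤ M := by rw [hMdef]; positivity
  set S : Set ℝ := {t : ℝ | 1 ≤ |t|} with hSdef
  have hSeq : S = Set.Iic (-1) ∪ Set.Ici 1 := by
    ext t
    simp only [hSdef, Set.mem_setOf_eq, Set.mem_union, Set.mem_Iic, Set.mem_Ici, le_abs]
    constructor
    · rintro (h | h)
      · exact Or.inr h
      · exact Or.inl (by linarith)
    · rintro (h | h)
      · exact Or.inr (by linarith)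
      · exact Or.inl h
  have hSmeas : MeasurableSet S := by
    rw [hSeq]; exact (measurableSet_Iic).union measurableSet_Ici
  -- integrability of the majorant
  have hIci : IntegrableOn (fun t : ℝ => |t| ^ (-(1 + η))) (Set.Ici 1) := by
    rw [integrableOn_Ici_iff_integrableOn_Ioi]
    have h1 : IntegrableOn (fun t : ℝ => t ^ (-(1 + η))) (Set.Ioi 1) :=
      integrableOn_Ioi_rpow_of_lt (by linarith) one_pos
    exact h1.congr_fun (fun t ht => by rw [abs_of_pos (lt_trans one_pos ht)]) measurableSet_Ioi
  have hGint : IntegrableOn (fun t : ℝ => |t| ^ (-(1 + η))) S := by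
    rw [hSeq]
    refine MeasureTheory.IntegrableOn.union ?_ hIci
    have h2 := (MeasurePreserving.integrableOn_comp_preimage
      (Measure.measurePreserving_neg (volume : Measure ℝ))
      (Homeomorph.neg ℝ).measurableEmbedding).2 hIci
    have h3 : ((fun t : ℝ => |t| ^ (-(1 + η))) ∘ Neg.neg) = fun t : ℝ => |t| ^ (-(1 + η)) := by
      funext t; simp [Function.comp, abs_neg]
    have h4 : (Neg.neg ⁻¹' Set.Ici (1:ℝ)) = Set.Iic (-1) := by
      ext t; simp [le_neg]
    rwa [h3, h4] at h2
  -- pointwise bound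
  have hpt : ∀ r : ℝ, 1 ≤ r → ∀ t ∈ S, gradSup (cutV Vl g lam vhat e1 r t) ≤
      M * r ^ (-(2 * γD) + ε) * |t| ^ (-(1 + η)) := by
    intro r hr t ht
    have ht1 : 1 ≤ |t| := ht
    have ht0 : 0 < |t| := by linarith
    have hr0 : 0 < r := by linarith
    have hst : Real.sqrt (1 + t ^ 2) ≤ Real.sqrt 2 * |t| := by
      rw [← Real.sqrt_sq (abs_nonneg t), ← Real.sqrt_mul (by norm_num : (0:ℝ) ≤ 2)]
      apply Real.sqrt_le_sqrt
      rw [sq_abs]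
      have h := mul_le_mul ht1 ht1 zero_le_one (abs_nonneg t)
      rw [one_mul, ← abs_mul, ← sq, abs_of_nonneg (sq_nonneg t)] at h
      linarith only [h]
    have htsq : 1 ≤ t ^ 2 := by
      have h := mul_le_mul ht1 ht1 zero_le_one (abs_nonneg t)
      rw [one_mul, ← abs_mul, ← sq, abs_of_nonneg (sq_nonneg t)] at h
      linarith only [h]
    have htle : |t| ≤ Real.sqrt (1 + t ^ 2) := by
      rw [← Real.sqrt_sq (abs_nonneg t)]
      apply Real.sqrt_le_sqrt
      rw [sq_abs]; linarith
    set c : ℝ := lam * r * Real.sqrt (1 + t ^ 2) with hcdef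
    have hcpos : 0 < c := by
      rw [hcdef]
      exact mul_pos (mul_pos hlam0 hr0) (Real.sqrt_pos.2 (by positivity))
    have hRHSnn : 0 ≤ M * r ^ (-(2 * γD) + ε) * |t| ^ (-(1 + η)) := by positivity
    show (⨆ x, ‖fderiv ℝ (cutV Vl g lam vhat e1 r t) x‖) ≤ _
    refine Real.iSup_le (fun x => ?_) hRHSnn
    set u : EuclideanSpace ℝ (Fin n) := (r * t) • vhat with hu
    set w : EuclideanSpace ℝ (Fin n) := (t ^ 2 / 2) • e1 with hw
    have hcut : cutV Vl g lam vhat e1 r t = fun z => Vl (z + u + w) * g (c⁻¹ • z) := by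
      funext z; rw [hu, hw, hcdef]; rfl
    set y0 : EuclideanSpace ℝ (Fin n) := c⁻¹ • x with hy0
    have hshift : HasFDerivAt (fun z : EuclideanSpace ℝ (Fin n) => Vl (z + u + w))
        (fderiv ℝ Vl (x + u + w)) x := by
      have h1 : HasFDerivAt (fun z : EuclideanSpace ℝ (Fin n) => z + u + w)
          (ContinuousLinearMap.id ℝ _) x := by
        simpa using ((hasFDerivAt_id x).add_const u).add_const w
      simpa [Function.comp_def] using (hVdiff (x + u + w)).hasFDerivAt.comp x h1
    have hsm : HasFDerivAt (fun z : EuclideanSpace ℝ (Fin n) => g (c⁻¹ • z))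
        ((fderiv ℝ g y0).comp (c⁻¹ • ContinuousLinearMap.id ℝ (EuclideanSpace ℝ (Fin n)))) x := by
      have h1 : HasFDerivAt (fun z : EuclideanSpace ℝ (Fin n) => c⁻¹ • z)
          (c⁻¹ • ContinuousLinearMap.id ℝ (EuclideanSpace ℝ (Fin n))) x :=
        (hasFDerivAt_id x).const_smul c⁻¹
      exact (hgd y0).hasFDerivAt.comp x h1
    have hprod : HasFDerivAt (cutV Vl g lam vhat e1 r t)
        (Vl (x + u + w) • ((fderiv ℝ g y0).comp
            (c⁻¹ • ContinuousLinearMap.id ℝ (EuclideanSpace ℝ (Fin n)))) +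
          g y0 • fderiv ℝ Vl (x + u + w)) x := by
      rw [hcut]; exact hshift.mul hsm
    rw [hprod.fderiv]
    have hL1 : ‖(fderiv ℝ g y0).comp
        (c⁻¹ • ContinuousLinearMap.id ℝ (EuclideanSpace ℝ (Fin n)))‖ ≤ c⁻¹ * Mg := by
      calc ‖(fderiv ℝ g y0).comp (c⁻¹ • ContinuousLinearMap.id ℝ (EuclideanSpace ℝ (Fin n)))‖
          ≤ ‖fderiv ℝ g y0‖ * ‖c⁻¹ • ContinuousLinearMap.id ℝ (EuclideanSpace ℝ (Fin n))‖ :=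
            ContinuousLinearMap.opNorm_comp_le _ _
        _ ≤ Mg * (|c⁻¹| * 1) := by
            refine mul_le_mul (hMg y0) ?_ (norm_nonneg _) hMgnn
            refine (norm_smul_le c⁻¹
              (ContinuousLinearMap.id ℝ (EuclideanSpace ℝ (Fin n)))).trans ?_
            rw [Real.norm_eq_abs]
            exact mul_le_mul_of_nonneg_left ContinuousLinearMap.norm_id_le (abs_nonneg _)
        _ = c⁻¹ * Mg := by rw [abs_of_pos (inv_pos.2 hcpos)]; ring
    have hnorm : ‖Vl (x + u + w) • ((fderiv ℝ g y0).comp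
            (c⁻¹ • ContinuousLinearMap.id ℝ (EuclideanSpace ℝ (Fin n)))) +
          g y0 • fderiv ℝ Vl (x + u + w)‖ ≤
        |Vl (x + u + w)| * (c⁻¹ * Mg) + |g y0| * ‖fderiv ℝ Vl (x + u + w)‖ := by
      calc ‖_ + _‖ ≤ ‖Vl (x + u + w) • ((fderiv ℝ g y0).comp
              (c⁻¹ • ContinuousLinearMap.id ℝ (EuclideanSpace ℝ (Fin n))))‖ +
            ‖g y0 • fderiv ℝ Vl (x + u + w)‖ := norm_add_le _ _
        _ ≤ |Vl (x + u + w)| * (c⁻¹ * Mg) + |g y0| * ‖fderiv ℝ Vl (x + u + w)‖ := by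
            refine add_le_add ?_ ?_
            · refine (norm_smul_le (Vl (x + u + w)) ((fderiv ℝ g y0).comp
                (c⁻¹ • ContinuousLinearMap.id ℝ (EuclideanSpace ℝ (Fin n))))).trans ?_
              rw [Real.norm_eq_abs]
              exact mul_le_mul_of_nonneg_left hL1 (abs_nonneg _)
            · refine (norm_smul_le (g y0) (fderiv ℝ Vl (x + u + w))).trans ?_
              rw [Real.norm_eq_abs]
    by_cases hx4 : ‖x‖ < 4 * c
    · -- main estimate
      have he1n : ‖e1‖ = 1 := by rw [he1, EuclideanSpace.norm_single]; norm_num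
      have hrtpos : 0 < r * |t| := mul_pos hr0 ht0
      have ht2pos : 0 < t ^ 2 := by linarith
      set X : ℝ := r * |t| + t ^ 2 with hXdef
      have hX : 0 < X := by rw [hXdef]; linarith
      -- lower bound on ‖u + w‖
      have hip : ⟪u, w⟫_ℝ = (r * t) * (t ^ 2 / 2) * ⟪vhat, e1⟫_ℝ := by
        rw [hu, hw, real_inner_smul_left, real_inner_smul_right]; ring
      have hsqn : ‖u + w‖ ^ 2 =
          (r * t) ^ 2 + 2 * ((r * t) * (t ^ 2 / 2) * ⟪vhat, e1⟫_ℝ) + (t ^ 2 / 2) ^ 2 := by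
        rw [norm_add_sq_real, hip, hu, hw, norm_smul, norm_smul, hvhat, he1n]
        rw [Real.norm_eq_abs, Real.norm_eq_abs]
        rw [abs_of_nonneg (by positivity : (0:ℝ) ≤ t ^ 2 / 2)]
        rw [mul_one, mul_one, sq_abs]
      have habs : |⟪vhat, e1⟫_ℝ| = δ := hδ.symm
      have hcross : -((r * |t|) * (t ^ 2 / 2) * δ) ≤ (r * t) * (t ^ 2 / 2) * ⟪vhat, e1⟫_ℝ := by
        have h1 : |(r * t) * (t ^ 2 / 2) * ⟪vhat, e1⟫_ℝ| = (r * |t|) * (t ^ 2 / 2) * δ := by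
          rw [abs_mul, abs_mul, habs, abs_mul, abs_of_pos hr0,
            abs_of_nonneg (by positivity : (0:ℝ) ≤ t ^ 2 / 2)]
        linarith [neg_abs_le ((r * t) * (t ^ 2 / 2) * ⟪vhat, e1⟫_ℝ), h1.le, h1.ge]
      have hrt2 : (r * t) ^ 2 = (r * |t|) ^ 2 := by
        rw [mul_pow, mul_pow, sq_abs]
      have hkey : ((1 - δ) / 2 * (r * |t| + t ^ 2 / 2)) ^ 2 ≤ ‖u + w‖ ^ 2 := by
        rw [hsqn, hrt2]
        exact aux_key hrtpos.le (by positivity) hδ0 hδ1 hcross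
      have hnormuv : (1 - δ) / 2 * (r * |t| + t ^ 2 / 2) ≤ ‖u + w‖ := by
        have h0 : 0 ≤ (1 - δ) / 2 * (r * |t| + t ^ 2 / 2) := by positivity
        calc (1 - δ) / 2 * (r * |t| + t ^ 2 / 2)
            = Real.sqrt (((1 - δ) / 2 * (r * |t| + t ^ 2 / 2)) ^ 2) := (Real.sqrt_sq h0).symm
          _ ≤ Real.sqrt (‖u + w‖ ^ 2) := Real.sqrt_le_sqrt hkey
          _ = ‖u + w‖ := Real.sqrt_sq (norm_nonneg _)
      have hxle : ‖x‖ ≤ (1 - δ) / 4 * (r * |t|) := by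
        have hs2 : (0:ℝ) < Real.sqrt 2 := by positivity
        have h1 : 4 * c ≤ (1 - δ) / 4 * (r * |t|) := by
          rw [hcdef, hlam]
          calc 4 * ((1 - δ) / (16 * Real.sqrt 2) * r * Real.sqrt (1 + t ^ 2))
              ≤ 4 * ((1 - δ) / (16 * Real.sqrt 2) * r * (Real.sqrt 2 * |t|)) := by
                apply mul_le_mul_of_nonneg_left _ (by norm_num)
                exact mul_le_mul_of_nonneg_left hst (by positivity)
            _ = (1 - δ) / 4 * (r * |t|) := by
                field_simp
                ring
        linarith [hx4.le]
      have htri : ‖u + w‖ - ‖x‖ ≤ ‖x + u + w‖ := by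
        have h1 : ‖u + w‖ ≤ ‖x + u + w‖ + ‖x‖ := by
          calc ‖u + w‖ = ‖(x + u + w) + (-x)‖ := by congr 1; abel
            _ ≤ ‖x + u + w‖ + ‖-x‖ := norm_add_le _ _
            _ = ‖x + u + w‖ + ‖x‖ := by rw [norm_neg]
        linarith
      have hxw : κ * X ≤ ‖x + u + w‖ := by
        rw [hκdef, hXdef]
        exact aux_lin hnormuv hxle htri
      have hsqrt : κ * X ≤ Real.sqrt (1 + ‖x + u + w‖ ^ 2) := by
        refine hxw.trans ?_
        calc ‖x + u + w‖ = Real.sqrt (‖x + u + w‖ ^ 2) := (Real.sqrt_sq (norm_nonneg _)).symm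
          _ ≤ Real.sqrt (1 + ‖x + u + w‖ ^ 2) := Real.sqrt_le_sqrt (by linarith)
      have hκX : 0 < κ * X := mul_pos hκ hX
      have hA : |Vl (x + u + w)| ≤ C0 * (κ * X) ^ (-γD) :=
        (hVb _).trans (mul_le_mul_of_nonneg_left
          (Real.rpow_le_rpow_of_nonpos hκX hsqrt (by linarith)) hC0.le)
      have hB : ‖fderiv ℝ Vl (x + u + w)‖ ≤ ↑n * (C1 * (κ * X) ^ (-γD - 1 / 2)) :=
        (hV1 _).trans (mul_le_mul_of_nonneg_left (mul_le_mul_of_nonneg_left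
          (Real.rpow_le_rpow_of_nonpos hκX hsqrt (by linarith)) hC1.le) (Nat.cast_nonneg n))
      -- term 2 : the g-derivative term
      have hcinv : c⁻¹ ≤ lam⁻¹ * (r⁻¹ * |t|⁻¹) := by
        have h1 : lam * r * |t| ≤ c := by
          rw [hcdef]
          exact mul_le_mul_of_nonneg_left htle (by positivity)
        have h2 : c⁻¹ ≤ (lam * r * |t|)⁻¹ :=
          inv_anti₀ (by positivity) h1
        calc c⁻¹ ≤ (lam * r * |t|)⁻¹ := h2
          _ = lam⁻¹ * (r⁻¹ * |t|⁻¹) := by rw [mul_inv, mul_inv]; ring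
      have hKX2 : (κ * X) ^ (-γD) ≤ κ ^ (-γD) * |t| ^ (-(2 * γD)) := by
        rw [Real.mul_rpow hκ.le hX.le]
        apply mul_le_mul_of_nonneg_left _ (Real.rpow_nonneg hκ.le _)
        calc X ^ (-γD) ≤ (t ^ 2) ^ (-γD) :=
              Real.rpow_le_rpow_of_nonpos ht2pos (by rw [hXdef]; linarith) (by linarith)
          _ = |t| ^ (2 * -γD) := aux_sq_rpow t (-γD)
          _ = |t| ^ (-(2 * γD)) := by ring_nf
      have hT2 : |Vl (x + u + w)| * (c⁻¹ * Mg) ≤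
          C0 * Mg * κ ^ (-γD) * lam⁻¹ * (r ^ (-(2 * γD) + ε) * |t| ^ (-(1 + η))) := by
        calc |Vl (x + u + w)| * (c⁻¹ * Mg)
            ≤ (C0 * (κ * X) ^ (-γD)) * ((lam⁻¹ * (r⁻¹ * |t|⁻¹)) * Mg) := by
              apply mul_le_mul hA (mul_le_mul_of_nonneg_right hcinv hMgnn)
                (by positivity) (by positivity)
          _ ≤ (C0 * (κ ^ (-γD) * |t| ^ (-(2 * γD)))) * ((lam⁻¹ * (r⁻¹ * |t|⁻¹)) * Mg) := by
              apply mul_le_mul_of_nonneg_right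
                (mul_le_mul_of_nonneg_left hKX2 hC0.le) (by positivity)
          _ = C0 * Mg * κ ^ (-γD) * lam⁻¹ * (r⁻¹ * (|t| ^ (-(2 * γD)) * |t|⁻¹)) := by ring
          _ ≤ C0 * Mg * κ ^ (-γD) * lam⁻¹ * (r ^ (-(2 * γD) + ε) * |t| ^ (-(1 + η))) := by
              apply mul_le_mul_of_nonneg_left _ (by positivity)
              apply mul_le_mul _ _ (by positivity) (by positivity)
              · rw [← Real.rpow_neg_one r]
                exact Real.rpow_le_rpow_of_exponent_le hr (by linarith)
              · have h5 : |t| ^ (-(2 * γD)) * |t|⁻¹ = |t| ^ (-(2 * γD) + -1) := by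
                  rw [Real.rpow_add ht0, Real.rpow_neg_one]
                rw [h5]
                exact Real.rpow_le_rpow_of_exponent_le ht1 (by linarith)
      -- term 1 : the V-derivative term
      have hXsplit : X ^ (-γD - 1 / 2) ≤ (r * |t|) ^ (-a) * (t ^ 2) ^ (-b) := by
        have h6 := aux_split hrtpos ht2pos (by rw [hXdef]; linarith : r * |t| ≤ X)
          (by rw [hXdef]; linarith : t ^ 2 ≤ X) (by linarith : -a ≤ 0) (by linarith : -b ≤ 0)
        have h7 : -γD - 1 / 2 = -a + -b := by rw [hbdef]; ring
        rw [h7]; exact h6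
      have hT1 : |g y0| * ‖fderiv ℝ Vl (x + u + w)‖ ≤
          ↑n * C1 * κ ^ (-γD - 1 / 2) * (r ^ (-(2 * γD) + ε) * |t| ^ (-(1 + η))) := by
        have hgy : |g y0| ≤ 1 := by
          rw [abs_of_nonneg (hg0 _)]; exact hg1 _
        calc |g y0| * ‖fderiv ℝ Vl (x + u + w)‖
            ≤ 1 * (↑n * (C1 * (κ * X) ^ (-γD - 1 / 2))) :=
              mul_le_mul hgy hB (norm_nonneg _) one_pos.le
          _ = ↑n * C1 * κ ^ (-γD - 1 / 2) * X ^ (-γD - 1 / 2) := by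
              rw [Real.mul_rpow hκ.le hX.le]; ring
          _ ≤ ↑n * C1 * κ ^ (-γD - 1 / 2) * ((r ^ (-a) * |t| ^ (-a)) * |t| ^ (2 * -b)) := by
              apply mul_le_mul_of_nonneg_left _ (by positivity)
              calc X ^ (-γD - 1 / 2) ≤ (r * |t|) ^ (-a) * (t ^ 2) ^ (-b) := hXsplit
                _ = (r ^ (-a) * |t| ^ (-a)) * |t| ^ (2 * -b) := by
                    rw [Real.mul_rpow hr0.le (abs_nonneg t), aux_sq_rpow t (-b)]
          _ = ↑n * C1 * κ ^ (-γD - 1 / 2) * (r ^ (-a) * (|t| ^ (-a) * |t| ^ (2 * -b))) := by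
              ring
          _ ≤ ↑n * C1 * κ ^ (-γD - 1 / 2) * (r ^ (-(2 * γD) + ε) * |t| ^ (-(1 + η))) := by
              apply mul_le_mul_of_nonneg_left _ (by positivity)
              apply mul_le_mul _ _ (by positivity) (by positivity)
              · refine Real.rpow_le_rpow_of_exponent_le hr ?_
                rw [hadef]; linarith
              · rw [← Real.rpow_add ht0]
                refine Real.rpow_le_rpow_of_exponent_le ht1 ?_
                rw [hbdef, hadef]; linarith
      have hfin : M * r ^ (-(2 * γD) + ε) * |t| ^ (-(1 + η)) =
          C0 * Mg * κ ^ (-γD) * lam⁻¹ * (r ^ (-(2 * γD) + ε) * |t| ^ (-(1 + η))) +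
          ↑n * C1 * κ ^ (-γD - 1 / 2) * (r ^ (-(2 * γD) + ε) * |t| ^ (-(1 + η))) := by
        rw [hMdef]; ring
      linarith only [hnorm, hT1, hT2, hfin]
    · -- outside the cutoff : derivative vanishes
      have h4c : 4 ≤ ‖y0‖ := by
        rw [hy0, norm_smul, Real.norm_eq_abs, abs_of_pos (inv_pos.2 hcpos)]
        rw [not_lt] at hx4
        calc (4:ℝ) = c⁻¹ * (4 * c) := by field_simp
          _ ≤ c⁻¹ * ‖x‖ := mul_le_mul_of_nonneg_left hx4 (inv_pos.2 hcpos).le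
      have hgy0 : g y0 = 0 := hg4 _ h4c
      have hdg0 : fderiv ℝ g y0 = 0 := by
        apply IsLocalMin.fderiv_eq_zero
        apply Filter.Eventually.filter_mono (le_refl (nhds y0))
        apply Filter.Eventually.of_forall
        intro y
        rw [hgy0]
        exact hg0 y
      rw [hgy0, hdg0]
      simp only [ContinuousLinearMap.zero_comp, smul_zero, zero_smul, add_zero, norm_zero]
      exact hRHSnn
  -- conclude
  set I : ℝ := ∫ t in S, |t| ^ (-(1 + η)) with hIdef
  have hInn : 0 ≤ I := by
    rw [hIdef]
    exact integral_nonneg fun t => Real.rpow_nonneg (abs_nonneg _) _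
  refine ⟨M * I + 1, by positivity, fun r hr => ?_⟩
  have hr0 : (0:ℝ) < r := by linarith
  have hrx : 0 < r ^ (-(2 * γD) + ε) := Real.rpow_pos_of_pos hr0 _
  calc ∫ t in S, gradSup (cutV Vl g lam vhat e1 r t)
      ≤ ∫ t in S, M * r ^ (-(2 * γD) + ε) * |t| ^ (-(1 + η)) := by
        apply integral_mono_of_nonneg
        · exact ae_of_all _ fun t => iSup_nonneg fun x => norm_nonneg _
        · exact hGint.const_mul _
        · exact (ae_restrict_iff' hSmeas).2 (ae_of_all _ fun t ht => hpt r hr t ht)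
    _ = M * r ^ (-(2 * γD) + ε) * I := by
        rw [hIdef, ← integral_const_mul]
    _ ≤ (M * I + 1) * r ^ (-(2 * γD) + ε) := by
        have h1 : M * r ^ (-(2 * γD) + ε) * I = (M * I) * r ^ (-(2 * γD) + ε) := by ring
        rw [h1]
        exact mul_le_mul_of_nonneg_right (by linarith only []) hrx.le
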